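/- arXiv:1505.03928 — 2 statements merged into one kernel-verified Lean document; each statement's English description precedes it below -/
import Mathlib

section
/- Let w = exp(xX + Σ y_i Y_i) ∈ G_{n+1} and W = aX + Σ b_i Y_i ∈ g_{n+1}, with g_{n+1} realized as (n+1)×(n+1) matrices as above. Then Ad_w W := w W w^{-1} lies in g_{n+1}, with the same X-component a, and its Y_j-components ξ_j are given by ξ_j = b_j + Σ_{k=1}^{j-1} (x^{k-1}/k!)(x b_{j-k} - a y_{j-k}). -/
open scoped Nat

/-- The matrix realization of `W = a·X + Σ_{i=1}^n b_i·Y_i` in `g_{n+1}`: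
`a` at positions `(i, i+1)` for `i ≤ n-2` and last-column entries `b_{n-i}` at `(i, n)`
(0-indexed), with `b : Fin n → ℝ`, `b k ↦ b_{k+1}`. -/
def lieMat (n : ℕ) (a : ℝ) (b : Fin n → ℝ) : Matrix (Fin (n + 1)) (Fin (n + 1)) ℝ :=
  Matrix.of fun i j =>
    if (j : ℕ) = n then (if h : (i : ℕ) < n then b ⟨n - 1 - i, by omega⟩ else 0)
    else if (j : ℕ) = (i : ℕ) + 1 then a
    else 0

/-!
For nilpotent `X` one has `exp X * W * exp (-X) = exp (ad X) W`. In `g_{n+1}` the `Y_j` span an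
abelian ideal on which `ad (x X + Σ y_i Y_i)` acts as `x` times the index shift `Y_j ↦ Y_{j+1}`,
while `[x X + Σ y_i Y_i, a X + Σ b_i Y_i]` is the shift of `Σ (x b_i - a y_i) Y_i`. So the `k`-th
iterate of `ad` on `W` is `x^(k-1)` times the `k`-fold shift of `x b - a y`, and summing the
exponential series gives the formula.
-/

open Polynomial in
theorem Matrix.IsUpperTriangular.pow_card_eq_zero {ι R : Type*} [Fintype ι] [DecidableEq ι]
    [LinearOrder ι] [CommRing R] {M : Matrix ι ι R} (hM : M.IsUpperTriangular)
    (hdiag : ∀ i, M i i = 0) : M ^ Fintype.card ι = 0 := by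
  simpa [M.charpoly_of_isUpperTriangular hM, hdiag] using M.aeval_self_charpoly

theorem NormedSpace.exp_eq_isNilpotent_exp {𝔸 : Type*} [Ring 𝔸] [Algebra ℚ 𝔸]
    [TopologicalSpace 𝔸] [IsTopologicalRing 𝔸] {a : 𝔸} (ha : IsNilpotent a) :
    NormedSpace.exp a = IsNilpotent.exp a := by
  obtain ⟨k, hk⟩ := ha
  rw [NormedSpace.exp_eq_tsum ℚ, IsNilpotent.exp_eq_sum hk]
  exact tsum_eq_sum fun i hi => by
    rw [pow_eq_zero_of_le (by simpa using hi) hk, smul_zero]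

namespace IsNilpotent

attribute [local instance] LieRing.ofAssociativeRing

variable {A : Type*} [Ring A] [Algebra ℚ A]

theorem exp_mulLeft {a : A} (ha : IsNilpotent a) :
    exp (LinearMap.mulLeft ℚ a) = LinearMap.mulLeft ℚ (exp a) :=
  (map_exp ha (Algebra.lmul ℚ A)).symm

theorem exp_mulRight {a : A} (ha : IsNilpotent a) :
    exp (LinearMap.mulRight ℚ a) = LinearMap.mulRight ℚ (exp a) := by
  obtain ⟨k, hk⟩ := ha
  have hk' : LinearMap.mulRight ℚ a ^ k = 0 := by
    rw [LinearMap.pow_mulRight, hk, LinearMap.mulRight_zero_eq_zero]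
  ext b
  simp [exp_eq_sum hk, exp_eq_sum hk', LinearMap.pow_mulRight, Finset.mul_sum]

theorem exp_mul_mul_exp_neg {a : A} (ha : IsNilpotent a) (b : A) :
    exp a * b * exp (-a) = exp (LieAlgebra.ad ℚ A a) b := by
  have hL : IsNilpotent (LinearMap.mulLeft ℚ a) := (LinearMap.isNilpotent_mulLeft_iff ℚ a).2 ha
  have hR : IsNilpotent (LinearMap.mulRight ℚ (-a)) :=
    (LinearMap.isNilpotent_mulRight_iff ℚ _).2 ha.neg
  have hneg : -LinearMap.mulRight ℚ a = LinearMap.mulRight ℚ (-a) := by ext; simp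
  rw [LieAlgebra.ad_eq_lmul_left_sub_lmul_right, Pi.sub_apply, sub_eq_add_neg, hneg,
    exp_add_of_commute (LinearMap.commute_mulLeft_right a (-a)) hL hR,
    exp_mulLeft ha, exp_mulRight ha.neg]
  simp [mul_assoc]

end IsNilpotent

namespace Filiform

variable {n : ℕ} {R : Type*} [Semiring R]

def shift : (Fin n → R) →ₗ[R] Fin n → R where
  toFun c j := if h : (j : ℕ) = 0 then 0 else c ⟨j - 1, by omega⟩
  map_add' c d := by ext j; split_ifs <;> simp [*]
  map_smul' r c := by ext j; split_ifs <;> simp [*]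

lemma shift_apply (c : Fin n → R) (j : Fin n) :
    shift c j = if h : (j : ℕ) = 0 then 0 else c ⟨j - 1, by omega⟩ := rfl

lemma shift_pow_apply (k : ℕ) (c : Fin n → R) (j : Fin n) :
    (shift ^ k) c j = if h : k ≤ j then c ⟨j - k, by omega⟩ else 0 := by
  induction k generalizing j with
  | zero => simp
  | succ k ih =>
    rw [pow_succ', Module.End.mul_apply, shift_apply]
    by_cases hj : (j : ℕ) = 0
    · simp [hj]
    · simp only [dif_neg hj, ih, Nat.sub_sub, add_comm 1 k]
      split_ifs <;> first | rfl | omega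

lemma sum_shift_pow_apply (x : ℝ) (c : Fin n → ℝ) (j : Fin n) :
    (∑ k ∈ Finset.range (n + 1), ((k + 1)! : ℚ)⁻¹ • x ^ k • (shift ^ (k + 1)) c) j =
      ∑ k ∈ Finset.Icc 1 j.val, x ^ (k - 1) / k ! * c ⟨j - k, by omega⟩ := by
  rw [Finset.sum_apply, ← Finset.Ico_add_one_right_eq_Icc, Finset.sum_Ico_eq_sum_range,
    add_tsub_cancel_right,
    ← Finset.sum_subset (Finset.range_subset_range.2 (show (j : ℕ) ≤ n + 1 by omega))]
  · refine Finset.sum_congr rfl fun k hk => ?_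
    rw [Finset.mem_range] at hk
    simp only [Pi.smul_apply, shift_pow_apply, dif_pos (show k + 1 ≤ j by omega), add_comm 1 k,
      add_tsub_cancel_right, Rat.smul_def]
    push_cast
    ring
  · intro k _ hk
    rw [Finset.mem_range] at hk
    rw [Pi.smul_apply, Pi.smul_apply, shift_pow_apply, dif_neg (by omega), smul_zero, smul_zero]

lemma lieMat_last_row (a : ℝ) (b : Fin n → ℝ) (j : Fin (n + 1)) :
    lieMat n a b (Fin.last n) j = 0 := by
  simp only [lieMat, Matrix.of_apply, Fin.val_last]
  split_ifs <;> first | rfl | omega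

lemma lieMat_isUpperTriangular (a : ℝ) (b : Fin n → ℝ) : (lieMat n a b).IsUpperTriangular := by
  intro i j (hji : j < i)
  simp only [lieMat, Matrix.of_apply]
  split_ifs <;> first | rfl | omega

lemma lieMat_apply_self (a : ℝ) (b : Fin n → ℝ) (i : Fin (n + 1)) : lieMat n a b i i = 0 := by
  simp only [lieMat, Matrix.of_apply]
  split_ifs <;> first | rfl | omega

lemma isNilpotent_lieMat (a : ℝ) (b : Fin n → ℝ) : IsNilpotent (lieMat n a b) :=
  ⟨_, (lieMat_isUpperTriangular a b).pow_card_eq_zero (lieMat_apply_self a b)⟩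

lemma lieMat_add (a a' : ℝ) (b b' : Fin n → ℝ) :
    lieMat n a b + lieMat n a' b' = lieMat n (a + a') (b + b') := by
  ext i j
  simp only [lieMat, Matrix.add_apply, Matrix.of_apply, Pi.add_apply]
  split_ifs <;> simp

lemma qsmul_lieMat (q : ℚ) (a : ℝ) (b : Fin n → ℝ) :
    q • lieMat n a b = lieMat n (q • a) (q • b) := by
  ext i j
  simp [lieMat]

lemma sum_lieMat {ι : Type*} (s : Finset ι) (a : ι → ℝ) (b : ι → Fin n → ℝ) :
    ∑ k ∈ s, lieMat n (a k) (b k) = lieMat n (∑ k ∈ s, a k) (∑ k ∈ s, b k) := by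
  classical
  induction s using Finset.induction_on with
  | empty => ext i j; simp [lieMat]
  | insert k s hk ih =>
    rw [Finset.sum_insert hk, ih, lieMat_add, Finset.sum_insert hk, Finset.sum_insert hk]

lemma lieMat_mul_apply (a : ℝ) (b : Fin n → ℝ) (M : Matrix (Fin (n + 1)) (Fin (n + 1)) ℝ)
    (i j : Fin (n + 1)) :
    (lieMat n a b * M) i j =
      (if h : (i : ℕ) < n then b ⟨n - 1 - i, by omega⟩ * M (Fin.last n) j else 0) +
      (if h : (i : ℕ) + 1 < n then a * M ⟨i + 1, by omega⟩ j else 0) := by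
  rw [Matrix.mul_apply, Fin.sum_univ_castSucc, add_comm]
  congr 1
  · simp [lieMat]
  · split_ifs with h
    · rw [Finset.sum_eq_single ⟨i + 1, h⟩]
      · simp [lieMat, h.ne]
      · intro m _ hm
        have : (m : ℕ) ≠ i + 1 := fun h' => hm (Fin.ext h')
        simp [lieMat, m.isLt.ne, this]
      · simp
    · refine Finset.sum_eq_zero fun m _ => ?_
      simp [lieMat, m.isLt.ne, show (m : ℕ) ≠ i + 1 by omega]

lemma lieMat_commutator (x a : ℝ) (u v : Fin n → ℝ) :
    lieMat n x u * lieMat n a v - lieMat n a v * lieMat n x u =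
      lieMat n 0 (shift (x • v - a • u)) := by
  ext i j
  simp only [Matrix.sub_apply, lieMat_mul_apply, lieMat_last_row]
  simp [lieMat, shift, Nat.sub_sub, add_comm]
  split_ifs <;> first | (exfalso; omega) | ring

section

attribute [local instance] LieRing.ofAssociativeRing

local notation "ad" => LieAlgebra.ad ℚ (Matrix (Fin (n + 1)) (Fin (n + 1)) ℝ)

lemma ad_lieMat (x a : ℝ) (y b : Fin n → ℝ) :
    ad (lieMat n x y) (lieMat n a b) = lieMat n 0 (shift (x • b - a • y)) := by
  rw [LieAlgebra.ad_apply, Ring.lie_def, lieMat_commutator]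

lemma ad_pow_succ_lieMat (x a : ℝ) (y b : Fin n → ℝ) (k : ℕ) :
    (ad (lieMat n x y) ^ (k + 1)) (lieMat n a b) =
      lieMat n 0 (x ^ k • (shift ^ (k + 1)) (x • b - a • y)) := by
  induction k with
  | zero => rw [zero_add, pow_one, ad_lieMat, pow_zero, one_smul, pow_one]
  | succ k ih =>
    rw [pow_succ', Module.End.mul_apply, ih, ad_lieMat, zero_smul, sub_zero, map_smul,
      map_smul, smul_smul, ← pow_succ', pow_succ' (shift : Module.End ℝ (Fin n → ℝ)) (k + 1)]
    rfl

lemma exp_ad_lieMat (x a : ℝ) (y b : Fin n → ℝ) :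
    IsNilpotent.exp (ad (lieMat n x y)) (lieMat n a b) =
      lieMat n a (b + ∑ k ∈ Finset.range (n + 1),
        ((k + 1)! : ℚ)⁻¹ • x ^ k • (shift ^ (k + 1)) (x • b - a • y)) := by
  have hvanish : (ad (lieMat n x y) ^ (n + 2)) • lieMat n a b = 0 := by
    have : (shift ^ (n + 2)) (x • b - a • y) = 0 := by
      ext j; rw [shift_pow_apply, dif_neg (by omega)]; rfl
    rw [Module.End.smul_def, ad_pow_succ_lieMat, this, smul_zero]
    ext i j; simp [lieMat]
  rw [← Module.End.smul_def, IsNilpotent.exp_smul_eq_sum hvanish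
    (LieAlgebra.ad_nilpotent_of_nilpotent (isNilpotent_lieMat x y)), Finset.sum_range_succ']
  simp only [Module.End.smul_def, ad_pow_succ_lieMat, qsmul_lieMat, sum_lieMat]
  simp [lieMat_add, add_comm]

end

end Filiform

/-- for `w = exp(x·X + Σ y_i·Y_i) ∈ G_{n+1}` and
`W = a·X + Σ b_i·Y_i ∈ g_{n+1}`, the adjoint action `Ad_w W = w W w⁻¹` lies in
`g_{n+1}`, with `X`-component `a` and `Y_j`-components
`ξ_j = b_j + Σ_{k=1}^{j-1} (x^{k-1}/k!)(x b_{j-k} - a y_{j-k})`. -/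
theorem ad_formula (n : ℕ) (x a : ℝ) (y b : Fin n → ℝ) :
    let w := NormedSpace.exp (lieMat n x y)
    w * lieMat n a b * w⁻¹ =
      lieMat n a (fun j =>
        b j + ∑ k ∈ Finset.Icc 1 j.val,
          x ^ (k - 1) / k ! *
            (x * b ⟨j.val - k, lt_of_le_of_lt (Nat.sub_le _ _) j.isLt⟩
              - a * y ⟨j.val - k, lt_of_le_of_lt (Nat.sub_le _ _) j.isLt⟩)) := by
  dsimp only
  have hX := Filiform.isNilpotent_lieMat x y
  rw [← Matrix.exp_neg, NormedSpace.exp_eq_isNilpotent_exp hX,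
    NormedSpace.exp_eq_isNilpotent_exp hX.neg, IsNilpotent.exp_mul_mul_exp_neg hX,
    Filiform.exp_ad_lieMat]
  congr 1
  ext j
  rw [Pi.add_apply, Filiform.sum_shift_pow_apply]
  rfl
end

section
/- For any a, x ∈ ℝ and z, z' ∈ ℝ^n, let z''_j := z_j + Σ_{i=0}^{j-1} (a^i/i!) z'_{j-i} and B_k(x, z) := Σ_{i=1}^k z_i x^{k-i}/(k-i)!. Then B_k(x, z'') = B_k(x, z) + B_k(x + a, z') for all 1 ≤ k ≤ n. -/
open scoped Nat

/-- `B_k(x, z) = Σ_{i=1}^k z_i x^{k-i}/(k-i)!`, with `z : ℕ → ℝ` read 1-indexed. -/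
noncomputable def Bpoly (k : ℕ) (x : ℝ) (z : ℕ → ℝ) : ℝ :=
  ∑ i ∈ Finset.Icc 1 k, z i * x ^ (k - i) / (k - i)!

lemma binom_aux (x a : ℝ) (N : ℕ) :
    ∑ j ∈ Finset.range (N + 1), a ^ j / j ! * (x ^ (N - j) / (N - j)!)
      = (x + a) ^ N / N ! := by
  rw [add_comm x a, add_pow, Finset.sum_div]
  refine Finset.sum_congr rfl fun j hj => ?_
  rw [Finset.mem_range, Nat.lt_succ_iff] at hj
  have h := Nat.choose_mul_factorial_mul_factorial hj
  have hj1 : (j ! : ℝ) ≠ 0 := Nat.cast_ne_zero.2 (Nat.factorial_ne_zero _)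
  have hj2 : ((N - j)! : ℝ) ≠ 0 := Nat.cast_ne_zero.2 (Nat.factorial_ne_zero _)
  have hN : (N ! : ℝ) ≠ 0 := Nat.cast_ne_zero.2 (Nat.factorial_ne_zero _)
  have h' : ((N.choose j : ℝ)) * j ! * (N - j)! = N ! := by exact_mod_cast congrArg Nat.cast h
  field_simp
  linear_combination (-(a ^ j * x ^ (N - j))) * h'


/-- the cocycle relation. With
`z''_j = z_j + Σ_{i=0}^{j-1} (a^i/i!) z'_{j-i}` (the `z`-part of the product
`(a,z)·(a',z')` in `G_{n+1}`), one has `B_k(x, z'') = B_k(x, z) + B_k(x+a, z')`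
for all `1 ≤ k ≤ n`. -/
theorem Bpoly_cocycle (n : ℕ) (a x : ℝ) (z z' : ℕ → ℝ) (k : ℕ) (hk1 : 1 ≤ k)
    (hkn : k ≤ n) :
    Bpoly k x (fun j => z j + ∑ i ∈ Finset.range j, a ^ i / i ! * z' (j - i)) =
      Bpoly k x z + Bpoly k (x + a) z' := by
  unfold Bpoly
  have h1 : ∀ j ∈ Finset.Icc 1 k,
      (z j + ∑ i ∈ Finset.range j, a ^ i / i ! * z' (j - i)) * x ^ (k - j) / (k - j)!
      = z j * x ^ (k - j) / (k - j)! +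
        ∑ i ∈ Finset.range j, a ^ i / i ! * z' (j - i) * (x ^ (k - j) / (k - j)!) := by
    intro j _
    rw [add_mul, add_div, Finset.sum_mul, Finset.sum_div]
    congr 1
    refine Finset.sum_congr rfl fun i _ => ?_
    ring
  rw [Finset.sum_congr rfl h1, Finset.sum_add_distrib]
  congr 1
  have h2 : ∀ j ∈ Finset.Icc 1 k,
      ∑ i ∈ Finset.range j, a ^ i / i ! * z' (j - i) * (x ^ (k - j) / (k - j)!)
      = ∑ m ∈ Finset.Icc 1 j, a ^ (j - m) / (j - m)! * z' m * (x ^ (k - j) / (k - j)!) := by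
    intro j _
    refine Finset.sum_nbij' (fun i => j - i) (fun m => j - m) ?_ ?_ ?_ ?_ ?_ <;>
      simp only [Finset.mem_range, Finset.mem_Icc]
    · omega
    · omega
    · omega
    · omega
    · intro i hi
      have hji : j - (j - i) = i := by omega
      rw [hji]
  rw [Finset.sum_congr rfl h2]
  rw [Finset.sum_comm' (s' := fun m => Finset.Icc m k) (t' := Finset.Icc 1 k)
    (by intro j m; simp only [Finset.mem_Icc]; omega)]
  refine Finset.sum_congr rfl fun m hm => ?_
  rw [Finset.mem_Icc] at hm
  have h4 : ∑ j ∈ Finset.Icc m k, a ^ (j - m) / (j - m)! * z' m * (x ^ (k - j) / (k - j)!)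
      = ∑ t ∈ Finset.range ((k - m) + 1),
          z' m * (a ^ t / t ! * (x ^ ((k - m) - t) / ((k - m) - t)!)) := by
    refine Finset.sum_nbij' (fun j => j - m) (fun t => m + t) ?_ ?_ ?_ ?_ ?_ <;>
      simp only [Finset.mem_range, Finset.mem_Icc]
    · omega
    · omega
    · omega
    · omega
    · intro j hj
      have e2 : k - j = (k - m) - (j - m) := by omega
      rw [e2]; ring
  rw [h4, ← Finset.mul_sum, binom_aux]
  ring
end
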